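/- Let q₁, q₂ be complex polynomials with deg q₁ = deg q₂ = d ≥ 2, and define F : ℂ × ℂ → ℂ × ℂ by F(w₁, w₂) = (q₁.eval w₁, q₂.eval w₂). Then the bicomplex Fatou set F₂(F) := (ℂ × ℂ) \ J₂(F) satisfies F₂(F) = ((ℂ \ J(q₁)) ×ˢ (ℂ \ J(q₂))) ∪ ((ℂ \ K(q₁)) ×ˢ J(q₂)) ∪ (J(q₁) ×ˢ (ℂ \ K(q₂))), where for a complex polynomial p, K(p) := {z ∈ ℂ : the orbit (p^[n](z))_{n∈ℕ} is bounded}, J(p) := {z ∈ ℂ : the family of iterates {p^[n]} is not normal (general sense) at z}, and ℂ \ K(p) is the unbounded Fatou component (basin of infinity) of p. -/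

import Mathlib

/-- A family `F : ι → α → E` of functions into a normed space is normal in the general sense on
a set `U` if every sequence in the family has a subsequence which either converges uniformly on
every compact subset of `U` to a limit function, or diverges uniformly to `∞` on every compact
subset of `U`. -/
def NormalGenOn {α E ι : Type*} [TopologicalSpace α] [NormedAddCommGroup E]
    (F : ι → α → E) (U : Set α) : Prop :=
  ∀ u : ℕ → ι, ∃ φ : ℕ → ℕ, StrictMono φ ∧
    ((∃ f : α → E, ∀ K : Set α, K ⊆ U → IsCompact K →
        TendstoUniformlyOn (fun n => F (u (φ n))) f Filter.atTop K) ∨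
     (∀ K : Set α, K ⊆ U → IsCompact K → ∀ M : ℝ, 0 < M →
        ∀ᶠ n in Filter.atTop, ∀ z ∈ K, M ≤ ‖F (u (φ n)) z‖))

/-- A family is normal in the general sense at a point if it is normal in the general sense on
some open neighborhood of that point. -/
def NormalGenAt {α E ι : Type*} [TopologicalSpace α] [NormedAddCommGroup E]
    (F : ι → α → E) (z : α) : Prop :=
  ∃ U : Set α, IsOpen U ∧ z ∈ U ∧ NormalGenOn F U

/-- The Julia set of a self-map `G` of a normed space: the set of points at which the family of
iterates `{G^[n] : n ∈ ℕ}` is not normal in the general sense. -/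
def juliaSet {E : Type*} [NormedAddCommGroup E] (G : E → E) : Set E :=
  {z | ¬ NormalGenAt (fun n : ℕ => G^[n]) z}

/-- The filled-in Julia set of a self-map `G` of a normed space: the set of points with bounded
orbit under `G`. -/
def filledJuliaSet {E : Type*} [NormedAddCommGroup E] (G : E → E) : Set E :=
  {z | Bornology.IsBounded (Set.range fun n : ℕ => G^[n] z)}

/-!
On the basin of infinity of a polynomial of degree `≥ 2` the iterates diverge locally
uniformly, so the product map is normal at any point one of whose coordinates escapes, whatever
the other coordinate does; if both coordinates are Fatou points, subsequences can be extracted in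
the two coordinates one after the other. Conversely, if the product is normal at `(z₁, z₂)` and the orbit
of `z₂` is bounded, no subsequence can diverge through the second coordinate, so restricting to
the slice `w₂ = z₂` shows that `z₁` is a Fatou point; by symmetry the same holds with the
coordinates exchanged.
-/

open Filter Set Bornology Topology Polynomial

section NormalFamilies

variable {α β ι E E' : Type*} [NormedAddCommGroup E] [NormedAddCommGroup E']

def DivergesUniformlyOn (F : ℕ → α → E) (s : Set α) : Prop :=
  ∀ M : ℝ, 0 < M → ∀ᶠ n in atTop, ∀ z ∈ s, M ≤ ‖F n z‖

namespace DivergesUniformlyOn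

variable {F : ℕ → α → E} {s t : Set α}

lemma mono (h : DivergesUniformlyOn F s) (hts : t ⊆ s) : DivergesUniformlyOn F t :=
  fun M hM => (h M hM).mono fun _ hn z hz => hn z (hts hz)

lemma comp_tendsto (h : DivergesUniformlyOn F s) {ψ : ℕ → ℕ} (hψ : Tendsto ψ atTop atTop) :
    DivergesUniformlyOn (fun n => F (ψ n)) s :=
  fun M hM => hψ.eventually (h M hM)

lemma prodMap_fst (h : DivergesUniformlyOn F s) (G : ℕ → β → E') (t : Set β) :
    DivergesUniformlyOn (fun n => Prod.map (F n) (G n)) (s ×ˢ t) :=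
  fun M hM => (h M hM).mono fun n hn w hw =>
    (hn w.1 hw.1).trans (norm_fst_le (Prod.map (F n) (G n) w))

lemma prodMap_snd {G : ℕ → β → E'} {t : Set β} (h : DivergesUniformlyOn G t) (F : ℕ → α → E)
    (s : Set α) : DivergesUniformlyOn (fun n => Prod.map (F n) (G n)) (s ×ˢ t) :=
  fun M hM => (h M hM).mono fun n hn w hw =>
    (hn w.2 hw.2).trans (norm_snd_le (Prod.map (F n) (G n) w))

end DivergesUniformlyOn

lemma exists_strictMono_const_or_tendsto_atTop (u : ℕ → ℕ) : ∃ φ : ℕ → ℕ, StrictMono φ ∧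
    ((∃ m, ∀ n, u (φ n) = m) ∨ Tendsto (fun n => u (φ n)) atTop atTop) := by
  by_cases h : ∃ m, {n | u n = m}.Infinite
  · obtain ⟨m, hm⟩ := h
    exact ⟨Nat.nth (u · = m), Nat.nth_strictMono hm, Or.inl ⟨m, Nat.nth_mem_of_infinite hm⟩⟩
  · push Not at h
    refine ⟨id, strictMono_id, Or.inr (tendsto_atTop.2 fun b => ?_)⟩
    rw [← Nat.cofinite_eq_atTop, eventually_cofinite]
    refine ((finite_lt_nat b).biUnion fun m _ => h m).subset fun n hn => ?_
    exact mem_biUnion (not_le.1 hn) rfl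

variable [TopologicalSpace α] [TopologicalSpace β] {F : ι → α → E} {G : ι → β → E'}

lemma normalGenOn_of_divergesUniformlyOn {F : ℕ → α → E} {U : Set α}
    (h : DivergesUniformlyOn F U) : NormalGenOn F U := by
  intro u
  obtain ⟨φ, hφ, ⟨m, hm⟩ | htop⟩ := exists_strictMono_const_or_tendsto_atTop u
  · refine ⟨φ, hφ, Or.inl ⟨F m, fun K _ _ => ?_⟩⟩
    exact fun V hV => .of_forall fun n z _ => hm n ▸ refl_mem_uniformity hV
  · exact ⟨φ, hφ, Or.inr fun K hK _ => (h.comp_tendsto htop).mono hK⟩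

namespace NormalGenOn

variable {U V : Set α}

lemma mono (h : NormalGenOn F U) (hVU : V ⊆ U) : NormalGenOn F V := fun u =>
  (h u).imp fun _ ⟨hφ, hc⟩ => ⟨hφ, hc.imp (fun ⟨f, hf⟩ => ⟨f, fun K hK => hf K (hK.trans hVU)⟩)
    fun hd K hK => hd K (hK.trans hVU)⟩

lemma prodMap {V : Set β} (hF : NormalGenOn F U) (hG : NormalGenOn G V) :
    NormalGenOn (fun i => Prod.map (F i) (G i)) (U ×ˢ V) := by
  intro u
  obtain ⟨φ₁, hφ₁, hF'⟩ := hF u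
  obtain ⟨φ₂, hφ₂, hG'⟩ := hG (u ∘ φ₁)
  refine ⟨φ₁ ∘ φ₂, hφ₁.comp hφ₂, ?_⟩
  have hproj : ∀ K ⊆ U ×ˢ V, Prod.fst '' K ⊆ U ∧ Prod.snd '' K ⊆ V := fun K hK =>
    ⟨image_subset_iff.2 fun w hw => (hK hw).1, image_subset_iff.2 fun w hw => (hK hw).2⟩
  rcases hF' with ⟨f, hf⟩ | hFdiv
  · rcases hG' with ⟨g, hg⟩ | hGdiv
    · refine Or.inl ⟨Prod.map f g, fun K hK hKc => ?_⟩
      have hprod := (hf _ (hproj K hK).1 (hKc.image continuous_fst)).prodMap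
        (hg _ (hproj K hK).2 (hKc.image continuous_snd))
      exact (hprod.seq_tendstoUniformlyOn (fun n => (φ₂ n, n))
        (hφ₂.tendsto_atTop.prodMk tendsto_id)).mono subset_prod
    · exact Or.inr fun K hK hKc => (DivergesUniformlyOn.prodMap_snd
        (hGdiv _ (hproj K hK).2 (hKc.image continuous_snd)) _ _).mono subset_prod
  · exact Or.inr fun K hK hKc => ((DivergesUniformlyOn.comp_tendsto
      (hFdiv _ (hproj K hK).1 (hKc.image continuous_fst)) hφ₂.tendsto_atTop).prodMap_fst _ _).mono
        subset_prod

lemma prodMap_swap {W : Set (α × β)} (h : NormalGenOn (fun i => Prod.map (F i) (G i)) W) :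
    NormalGenOn (fun i => Prod.map (G i) (F i)) (Prod.swap ⁻¹' W) := by
  intro u
  obtain ⟨φ, hφ, hc⟩ := h u
  have hK : ∀ K ⊆ Prod.swap ⁻¹' W, IsCompact K →
      Prod.swap ⁻¹' K ⊆ W ∧ IsCompact (Prod.swap ⁻¹' K) :=
    fun K hKW hKc => ⟨fun w hw => hKW hw, image_swap_eq_preimage_swap ▸ hKc.image continuous_swap⟩
  refine ⟨φ, hφ, ?_⟩
  rcases hc with ⟨f, hf⟩ | hdiv
  · refine Or.inl ⟨Prod.swap ∘ f ∘ Prod.swap, fun K hKW hKc => ?_⟩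
    exact uniformContinuous_swap.comp_tendstoUniformlyOn
      ((hf _ (hK K hKW hKc).1 (hK K hKW hKc).2).comp Prod.swap)
  · refine Or.inr fun K hKW hKc M hM => ?_
    filter_upwards [hdiv _ (hK K hKW hKc).1 (hK K hKW hKc).2 M hM] with n hn w hw
    simpa [Prod.norm_def, max_comm] using hn w.swap hw

lemma fst_of_isBounded {b : β} (h : NormalGenOn (fun i => Prod.map (F i) (G i)) (U ×ˢ {b}))
    (hb : IsBounded (range fun i => G i b)) : NormalGenOn F U := by
  obtain ⟨C, hC⟩ := isBounded_iff_forall_norm_le.1 hb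
  intro u
  obtain ⟨φ, hφ, hc⟩ := h u
  refine ⟨φ, hφ, ?_⟩
  rcases hc with ⟨f, hf⟩ | hdiv
  · refine Or.inl ⟨fun z => (f (z, b)).1, fun K hKU hKc => ?_⟩
    have hslice := (hf _ (prod_mono hKU subset_rfl) (hKc.prod isCompact_singleton)).comp
      fun z => (z, b)
    exact (uniformContinuous_fst.comp_tendstoUniformlyOn hslice).mono fun z hz => ⟨hz, rfl⟩
  · refine Or.inr fun K hKU hKc M hM => ?_
    filter_upwards [hdiv _ (prod_mono hKU subset_rfl) (hKc.prod isCompact_singleton)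
      (max M (C + 1)) (lt_max_of_lt_left hM)] with n hn z hz
    -- the second coordinate stays below `C`, so the divergence happens in the first one
    rcases le_max_iff.1 (hn (z, b) ⟨hz, rfl⟩) with hfst | hsnd
    · exact (le_max_left _ _).trans hfst
    · linarith [(le_max_right _ _).trans (hsnd.trans (hC _ ⟨u (φ n), rfl⟩))]

end NormalGenOn

namespace NormalGenAt

variable {a : α} {b : β}

lemma prodMap (hF : NormalGenAt F a) (hG : NormalGenAt G b) :
    NormalGenAt (fun i => Prod.map (F i) (G i)) (a, b) := by
  obtain ⟨U, hUo, haU, hU⟩ := hF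
  obtain ⟨V, hVo, hbV, hV⟩ := hG
  exact ⟨U ×ˢ V, hUo.prod hVo, ⟨haU, hbV⟩, hU.prodMap hV⟩

lemma prodMap_swap (h : NormalGenAt (fun i => Prod.map (F i) (G i)) (a, b)) :
    NormalGenAt (fun i => Prod.map (G i) (F i)) (b, a) := by
  obtain ⟨W, hWo, hW, hN⟩ := h
  exact ⟨Prod.swap ⁻¹' W, hWo.preimage continuous_swap, hW, hN.prodMap_swap⟩

lemma fst_of_isBounded (h : NormalGenAt (fun i => Prod.map (F i) (G i)) (a, b))
    (hb : IsBounded (range fun i => G i b)) : NormalGenAt F a := by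
  obtain ⟨W, hWo, habW, hW⟩ := h
  obtain ⟨U, V, hUo, -, haU, hbV, hUV⟩ := isOpen_prod_iff.1 hWo a b habW
  exact ⟨U, hUo, haU,
    (hW.mono ((prod_mono subset_rfl (singleton_subset_iff.2 hbV)).trans hUV)).fst_of_isBounded hb⟩

end NormalGenAt

lemma normalGenAt_prodMap_of_divergesUniformlyOn_fst {F : ℕ → α → E} {V : Set α} {a : α}
    (hV : V ∈ 𝓝 a) (hF : DivergesUniformlyOn F V) (G : ℕ → β → E') (b : β) :
    NormalGenAt (fun n => Prod.map (F n) (G n)) (a, b) := by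
  obtain ⟨U, hUV, hUo, haU⟩ := mem_nhds_iff.1 hV
  exact ⟨U ×ˢ univ, hUo.prod isOpen_univ, ⟨haU, trivial⟩,
    normalGenOn_of_divergesUniformlyOn ((hF.mono hUV).prodMap_fst G univ)⟩

end NormalFamilies

section Dynamics

variable {E E' : Type*} [NormedAddCommGroup E] [NormedAddCommGroup E']

lemma two_pow_mul_norm_le_norm_iterate {f : E → E} {R : ℝ}
    (hf : ∀ z, R ≤ ‖z‖ → 2 * ‖z‖ ≤ ‖f z‖) {z : E} (hz : R ≤ ‖z‖) (k : ℕ) :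
    2 ^ k * ‖z‖ ≤ ‖f^[k] z‖ := by
  induction k with
  | zero => simp
  | succ k ih =>
    have hRk : R ≤ ‖f^[k] z‖ :=
      hz.trans ((le_mul_of_one_le_left (norm_nonneg _) (one_le_pow₀ one_le_two)).trans ih)
    calc 2 ^ (k + 1) * ‖z‖ = 2 * (2 ^ k * ‖z‖) := by ring
      _ ≤ 2 * ‖f^[k] z‖ := by gcongr
      _ ≤ ‖f^[k + 1] z‖ := by rw [Function.iterate_succ_apply']; exact hf _ hRk

lemma exists_mem_nhds_divergesUniformlyOn_iterate {f : E → E} (hf : Continuous f)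
    (hgrowth : ∀ᶠ z in cobounded E, 2 * ‖z‖ ≤ ‖f z‖) {z : E} (hz : z ∉ filledJuliaSet f) :
    ∃ V ∈ 𝓝 z, DivergesUniformlyOn (fun n => f^[n]) V := by
  obtain ⟨R, -, hR⟩ := hasBasis_cobounded_norm.eventually_iff.1 hgrowth
  set r := max R 1
  have hunbdd : ∀ x : ℝ, ∃ n, x < ‖f^[n] z‖ := by
    simpa [filledJuliaSet, isBounded_iff_forall_norm_le] using hz
  obtain ⟨N, hN⟩ := hunbdd r
  refine ⟨{w | r < ‖f^[N] w‖}, (isOpen_lt continuous_const (hf.iterate N).norm).mem_nhds hN,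
    fun M _ => ?_⟩
  have hr : ∀ w, r ≤ ‖w‖ → 2 * ‖w‖ ≤ ‖f w‖ := fun _ hw => hR ((le_max_left R 1).trans hw)
  have hlim : Tendsto (fun n => 2 ^ (n - N) * r) atTop atTop :=
    ((tendsto_pow_atTop_atTop_of_one_lt one_lt_two).comp (tendsto_sub_atTop_nat N)).atTop_mul_const
      (by positivity)
  filter_upwards [hlim.eventually_ge_atTop M, eventually_ge_atTop N] with n hMn hNn w hw
  calc M ≤ 2 ^ (n - N) * r := hMn
    _ ≤ 2 ^ (n - N) * ‖f^[N] w‖ := by gcongr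
    _ ≤ ‖f^[n - N] (f^[N] w)‖ := two_pow_mul_norm_le_norm_iterate hr hw.le _
    _ = ‖f^[n] w‖ := by rw [← Function.iterate_add_apply, Nat.sub_add_cancel hNn]

theorem compl_juliaSet_prodMap {f : E → E} {g : E' → E'}
    (hf : ∀ z ∉ filledJuliaSet f, ∃ V ∈ 𝓝 z, DivergesUniformlyOn (fun n => f^[n]) V)
    (hg : ∀ z ∉ filledJuliaSet g, ∃ V ∈ 𝓝 z, DivergesUniformlyOn (fun n => g^[n]) V) :
    (juliaSet (Prod.map f g))ᶜ =
      ((juliaSet f)ᶜ ×ˢ (juliaSet g)ᶜ) ∪ ((filledJuliaSet f)ᶜ ×ˢ juliaSet g) ∪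
        (juliaSet f ×ˢ (filledJuliaSet g)ᶜ) := by
  ext ⟨z₁, z₂⟩
  simp only [juliaSet, filledJuliaSet, Prod.map_iterate, mem_compl_iff, mem_union, mem_prod,
    mem_ofPred_eq, not_not]
  constructor
  · intro h
    have h₁ := h.fst_of_isBounded
    have h₂ := h.prodMap_swap.fst_of_isBounded
    tauto
  · rintro ((⟨h₁, h₂⟩ | ⟨h₁, -⟩) | ⟨-, h₂⟩)
    · exact h₁.prodMap h₂
    · obtain ⟨V, hV, hdiv⟩ := hf z₁ h₁
      exact normalGenAt_prodMap_of_divergesUniformlyOn_fst hV hdiv _ z₂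
    · obtain ⟨V, hV, hdiv⟩ := hg z₂ h₂
      exact (normalGenAt_prodMap_of_divergesUniformlyOn_fst hV hdiv _ z₁).prodMap_swap

end Dynamics

lemma Polynomial.eventually_two_mul_norm_le_norm_eval {𝕜 : Type*} [NormedField 𝕜] {p : 𝕜[X]}
    (hp : 2 ≤ p.natDegree) : ∀ᶠ z in cobounded 𝕜, 2 * ‖z‖ ≤ ‖p.eval z‖ := by
  have hdivX : 0 < p.divX.degree := by
    rw [← natDegree_pos_iff_degree_pos, natDegree_divX_eq_natDegree_tsub_one]
    omega
  have hdivX_large := p.divX.tendsto_norm_atTop hdivX tendsto_norm_cobounded_atTop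
  filter_upwards [hdivX_large.eventually_ge_atTop 3, eventually_cobounded_le_norm ‖p.coeff 0‖]
    with z hquot hz
  have heval : p.eval z = z * p.divX.eval z + p.coeff 0 := by
    conv_lhs => rw [← X_mul_divX_add p]
    simp only [eval_add, eval_mul, eval_X, eval_C]
  have htri := norm_sub_le (z * p.divX.eval z + p.coeff 0) (p.coeff 0)
  rw [add_sub_cancel_right, norm_mul] at htri
  rw [heval]
  nlinarith [mul_le_mul_of_nonneg_left hquot (norm_nonneg z)]

/-- For a non-degenerate bicomplex polynomial `F(w₁, w₂) = (q₁(w₁), q₂(w₂))` of degree `d ≥ 2`,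
the bicomplex Fatou set `F₂(F) = (ℂ × ℂ) \ J₂(F)` is given by
`F₂(F) = ((ℂ \ J(q₁)) ×ˢ (ℂ \ J(q₂))) ∪ ((ℂ \ K(q₁)) ×ˢ J(q₂)) ∪ (J(q₁) ×ˢ (ℂ \ K(q₂)))`,
where `ℂ \ K(p)` is the unbounded Fatou component (basin of infinity) of `p`. -/
theorem stmt18 (q₁ q₂ : Polynomial ℂ) (d : ℕ) (hd : 2 ≤ d)
    (h₁ : q₁.natDegree = d) (h₂ : q₂.natDegree = d) :
    (juliaSet (fun w : ℂ × ℂ => (q₁.eval w.1, q₂.eval w.2)))ᶜ =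
      ((juliaSet (fun z : ℂ => q₁.eval z))ᶜ ×ˢ (juliaSet (fun z : ℂ => q₂.eval z))ᶜ) ∪
      ((filledJuliaSet (fun z : ℂ => q₁.eval z))ᶜ ×ˢ juliaSet (fun z : ℂ => q₂.eval z)) ∪
      (juliaSet (fun z : ℂ => q₁.eval z) ×ˢ (filledJuliaSet (fun z : ℂ => q₂.eval z))ᶜ) := by
  have escape : ∀ q : ℂ[X], q.natDegree = d → ∀ z ∉ filledJuliaSet (fun z : ℂ => q.eval z),
      ∃ V ∈ 𝓝 z, DivergesUniformlyOn (fun n => (fun z : ℂ => q.eval z)^[n]) V :=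
    fun q hq _ =>
      exists_mem_nhds_divergesUniformlyOn_iterate q.continuous
        (eventually_two_mul_norm_le_norm_eval (hq ▸ hd))
  exact compl_juliaSet_prodMap (escape q₁ h₁) (escape q₂ h₂)
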